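/- arXiv:2012.06379 — 4 statements merged into one kernel-verified Lean document; each statement's English description precedes it below -/
import Mathlib

section
/- Let x be a word over {1,2}, with g(x,m) defined as g(x,m) = β_0 + ⋯ + β_{m−1} + 2m − 1 from the decomposition x = 1^{β_k} 2 1^{β_{k−1}} 2 ⋯ 2 1^{β_0} (k = number of 2s). Suppose x = α_1⋯α_a α_{a+1}⋯α_A with |α_{a+1}⋯α_A| = i (the suffix has digit sum i). Then ∏_{j=1}^{k}(g(x,j) − i) = [∏_{j ∈ {1,…,|x|} \ {i}} (j − i)] · 1/[(α_A − i)(α_A+α_{A−1} − i)⋯(α_A+⋯+α_{a+2} − i)] · 1/[(α_A+⋯+α_a − i)(α_A+⋯+α_{a−1} − i)⋯(α_A+⋯+α_1 − i)]. -/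
def takeBefore2 : ℕ → List ℕ → List ℕ
  | _, [] => []
  | m, a :: t =>
      if a = 2 then (if m ≤ 1 then [] else a :: takeBefore2 (m - 1) t)
      else a :: takeBefore2 m t

/-- `gval x m` is `g(x,m) = β₀ + ⋯ + β_{m-1} + 2m - 1`, computed as one plus the digit
sum of the part of `x` lying strictly to the right of the `m`-th `2` counted from the right. -/
def gval (x : List ℕ) (m : ℕ) : ℕ := 1 + (takeBefore2 m x.reverse).sum

/-! Reading `x` from the right, the suffix sums `(x.drop t).sum` climb from `0` to `x.sum` in
steps of `1` and `2`, and the step across the `j`-th `2` from the right skips exactly the value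
`gval x j`. Hence the values `gval x j` and the nonzero suffix sums enumerate `1, …, x.sum` once
each, so `∏ⱼ f (gval x j) * ∏ₜ f (x.drop t).sum = ∏ᵥ f v` for every `f`. Removing the common value
`i = (x.drop a).sum` from both sides and taking `f v = v - i`, the remaining suffix sums differ
from `i` because they strictly decrease in `t`, so their factors can be divided out. -/

open Finset

theorem takeBefore2_append {l : List ℕ} {m : ℕ} (h₁ : 1 ≤ m) (h₂ : m ≤ l.count 2)
    (r : List ℕ) : takeBefore2 m (l ++ r) = takeBefore2 m l := by
  induction l generalizing m with
  | nil => simp at h₂; omega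
  | cons b t ih =>
    rw [List.count_cons] at h₂
    by_cases hb : b = 2
    · subst hb
      by_cases hm : m ≤ 1
      · simp [takeBefore2, hm]
      · simp only [List.cons_append, takeBefore2, if_true, hm, if_false]
        rw [ih (by omega) (by simp at h₂; omega)]
    · simp only [List.cons_append, takeBefore2, hb, if_false]
      rw [ih h₁ (by simpa [hb] using h₂)]

theorem takeBefore2_count_add_one_append_two (l : List ℕ) :
    takeBefore2 (l.count 2 + 1) (l ++ [2]) = l := by
  induction l with
  | nil => simp [takeBefore2]
  | cons b t ih =>
    by_cases hb : b = 2
    · subst hb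
      simpa [takeBefore2, List.count_cons] using ih
    · simpa [takeBefore2, List.count_cons, hb] using ih

theorem gval_cons {y : List ℕ} {j : ℕ} (h₁ : 1 ≤ j) (h₂ : j ≤ y.count 2) (d : ℕ) :
    gval (d :: y) j = gval y j := by
  rw [gval, gval, List.reverse_cons, takeBefore2_append h₁ (by rwa [List.count_reverse])]

theorem gval_two_cons_count_add_one (y : List ℕ) :
    gval (2 :: y) (y.count 2 + 1) = y.sum + 1 := by
  rw [gval, List.reverse_cons, ← List.count_reverse, takeBefore2_count_add_one_append_two,
    List.sum_reverse, add_comm]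

@[to_additive]
theorem prod_Icc_gval_cons {M : Type*} [CommMonoid M] (f : ℕ → M) (d : ℕ) (y : List ℕ) :
    ∏ j ∈ Icc 1 (y.count 2), f (gval (d :: y) j) =
      ∏ j ∈ Icc 1 (y.count 2), f (gval y j) :=
  prod_congr rfl fun j hj => by
    rw [gval_cons (mem_Icc.1 hj).1 (mem_Icc.1 hj).2]

@[to_additive]
theorem prod_gval_mul_prod_sum_drop {M : Type*} [CommMonoid M] (f : ℕ → M) {x : List ℕ}
    (hx : ∀ d ∈ x, d = 1 ∨ d = 2) :
    (∏ j ∈ Icc 1 (x.count 2), f (gval x j)) *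
        ∏ t ∈ range x.length, f (x.drop t).sum =
      ∏ v ∈ Icc 1 x.sum, f v := by
  induction x with
  | nil => simp
  | cons d y ih =>
    rw [List.forall_mem_cons] at hx
    rw [List.length_cons, prod_range_succ', List.drop_zero]
    simp only [List.drop_succ_cons]
    rcases hx.1 with rfl | rfl
    · rw [List.count_cons_of_ne (by decide), prod_Icc_gval_cons, List.sum_cons, add_comm,
        prod_Icc_succ_top (by omega), ← ih hx.2, mul_assoc]
    · rw [List.count_cons_self, prod_Icc_succ_top (by omega), prod_Icc_gval_cons,
        gval_two_cons_count_add_one, List.sum_cons, show 2 + y.sum = y.sum + 1 + 1 by omega,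
        prod_Icc_succ_top (by omega), prod_Icc_succ_top (by omega), ← ih hx.2]
      ac_rfl

theorem gval_ne_sum_drop {x : List ℕ} (hx : ∀ d ∈ x, d = 1 ∨ d = 2) {j t : ℕ}
    (hj : j ∈ Icc 1 (x.count 2)) (ht : t ≤ x.length) : gval x j ≠ (x.drop t).sum := by
  rcases ht.lt_or_eq with ht | rfl
  · -- For `f = ({·})` the identity reads: the two families together are the nodup multiset `Icc`.
    have hpart := sum_gval_add_sum_sum_drop (fun v => ({v} : Multiset ℕ)) hx
    rw [sum_multiset_singleton] at hpart
    have hdisj := (Multiset.nodup_add.1 (hpart ▸ (Icc 1 x.sum).nodup)).2.2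
    intro heq
    exact Multiset.disjoint_left.1 hdisj
      (Multiset.mem_sum.2 ⟨j, hj, Multiset.mem_singleton_self _⟩)
      (Multiset.mem_sum.2 ⟨t, mem_range.2 ht, Multiset.mem_singleton.2 heq⟩)
  · simp [gval]

theorem strictAntiOn_sum_drop {x : List ℕ} (hx : ∀ d ∈ x, 0 < d) :
    StrictAntiOn (fun t => (x.drop t).sum) (Set.Iic x.length) :=
  strictAntiOn_Iic_of_succ_lt fun t ht => by
    have := hx _ (List.getElem_mem ht)
    simp only [Order.succ_eq_add_one]
    rw [List.drop_eq_getElem_cons ht, List.sum_cons]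
    omega

theorem prod_gval_mul_prod_erase_sum_drop {M : Type*} [CommMonoid M] (f : ℕ → M) {x : List ℕ}
    (hx : ∀ d ∈ x, d = 1 ∨ d = 2) {a : ℕ} (ha : a ≤ x.length) :
    (∏ j ∈ Icc 1 (x.count 2), f (gval x j)) *
        ∏ t ∈ (range x.length).erase a, f (x.drop t).sum =
      ∏ v ∈ (Icc 1 x.sum).erase (x.drop a).sum, f v := by
  have hinj := (strictAntiOn_sum_drop fun d hd => by rcases hx d hd with h | h <;> omega).injOn
  -- The unpunctured identity for `f` updated to `1` at `(x.drop a).sum`, hit once on each side.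
  set g := Function.update f (x.drop a).sum 1
  have hG : ∏ j ∈ Icc 1 (x.count 2), g (gval x j) =
      ∏ j ∈ Icc 1 (x.count 2), f (gval x j) :=
    prod_congr rfl fun j hj => Function.update_of_ne (gval_ne_sum_drop hx hj ha) _ _
  have hT : ∏ t ∈ range x.length, g (x.drop t).sum =
      ∏ t ∈ (range x.length).erase a, f (x.drop t).sum := by
    rw [← prod_erase (f := fun t => g (x.drop t).sum) _ (Function.update_self _ _ _)]
    refine prod_congr rfl fun t ht => Function.update_of_ne (fun h => ?_) _ _
    rw [mem_erase, mem_range] at ht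
    exact ht.1 (hinj ht.2.le ha h)
  have hI : ∏ v ∈ Icc 1 x.sum, g v = ∏ v ∈ (Icc 1 x.sum).erase (x.drop a).sum, f v := by
    rw [← prod_erase (f := g) _ (Function.update_self _ _ _)]
    exact prod_congr rfl fun v hv => Function.update_of_ne (ne_of_mem_erase hv) _ _
  rw [← hG, ← hT, ← hI, prod_gval_mul_prod_sum_drop g hx]

theorem stmt5 (x : List ℕ) (hx : ∀ d ∈ x, d = 1 ∨ d = 2) (a i : ℕ)
    (ha : a ≤ x.length) (hsum : (x.drop a).sum = i) :
    (∏ j ∈ Finset.Icc 1 (x.count 2), ((gval x j : ℚ) - (i : ℚ))) =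
      (∏ j ∈ (Finset.Icc 1 x.sum).erase i, ((j : ℚ) - (i : ℚ))) *
        (∏ t ∈ Finset.Ico (a + 1) x.length, (((x.drop t).sum : ℚ) - (i : ℚ)))⁻¹ *
        (∏ t ∈ Finset.range a, (((x.drop t).sum : ℚ) - (i : ℚ)))⁻¹ := by
  subst hsum
  have hinj := (strictAntiOn_sum_drop fun d hd => by rcases hx d hd with h | h <;> omega).injOn
  have hne : ∀ t ≤ x.length, t ≠ a → ((x.drop t).sum : ℚ) - (x.drop a).sum ≠ 0 :=
    fun t ht hta => sub_ne_zero.2 <| Nat.cast_injective.ne fun h => hta (hinj ht ha h)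
  have hB : ∏ t ∈ range a, (((x.drop t).sum : ℚ) - (x.drop a).sum) ≠ 0 :=
    prod_ne_zero_iff.2 fun t ht => hne t (by simp at ht; omega) (by simp at ht; omega)
  have hC : ∏ t ∈ Ico (a + 1) x.length, (((x.drop t).sum : ℚ) - (x.drop a).sum) ≠ 0 :=
    prod_ne_zero_iff.2 fun t ht => hne t (by simp at ht; omega) (by simp at ht; omega)
  have hsplit : (range x.length).erase a = range a ∪ Ico (a + 1) x.length := by
    ext t; simp only [mem_erase, mem_range, mem_union, mem_Ico]; omega
  have hdisj : Disjoint (range a) (Ico (a + 1) x.length) :=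
    disjoint_left.2 fun t h₁ h₂ => by simp at h₁ h₂; omega
  rw [← prod_gval_mul_prod_erase_sum_drop (fun v => (v : ℚ) - (x.drop a).sum) hx ha, hsplit,
    prod_union hdisj, ← mul_assoc, mul_inv_cancel_right₀ hC, mul_inv_cancel_right₀ hB]
end

section
/- For natural numbers Y ≥ 1 and S ≥ 1, Ξ(0,Y,S) = Σ_{e=1}^{Y+1} e · Ξ(0,e,S−1), where Ξ(0,Y,S) = Σ_{Δ ∈ Ω(0,Y,S)} ∏_{j=1}^{S} e(Δ,j). -/
/-- The heights attained immediately after each up-step of a trajectory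
(listed in order of occurrence): `e(Δ,1), …, e(Δ,S)`. -/
def upsList (L : List ℕ) : List ℕ :=
  ((L.zip L.tail).filter (fun p => p.2 == p.1 + 1)).map Prod.snd

/-- `L` is a ±1-step trajectory (of nonnegative integers) from `Y` to `X`. -/
def IsTraj (Y X : ℕ) (L : List ℕ) : Prop :=
  L.head? = some Y ∧ L.getLast? = some X ∧
    L.Chain' (fun a b => b = a + 1 ∨ a = b + 1)

/-- `Ω(X,Y,S)`: nonnegative ±1-step trajectories from `Y` to `X` with exactly `S` up-steps. -/
def Omega (X Y S : ℕ) : Set (List ℕ) :=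
  {L | IsTraj Y X L ∧ (upsList L).length = S}

/-- `Ξ(X,Y,S) = Σ_{Δ ∈ Ω(X,Y,S)} ∏_{j=1}^{S} e(Δ,j)`. -/
noncomputable def XiZ (X Y S : ℕ) : ℤ :=
  ∑ᶠ L ∈ Omega X Y S, ((upsList L).prod : ℤ)

/-!
Cut a trajectory from `Y` with at least one up-step at its first up-step, from `e - 1` to `e`.
Before it the trajectory descends straight from `Y` to `e - 1`, so `1 ≤ e ≤ Y + 1`; after it
comes an arbitrary trajectory from `e` with one up-step fewer. This is a bijection, and the
first up-step contributes the factor `e(Δ,1) = e` to the weight. The same decomposition shows,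
by induction on the number of up-steps, that `Ω(X,Y,S)` is finite, so the sums are genuine.
-/

lemma upsList_cons (x : ℕ) (L : List ℕ) :
    upsList (x :: L) = (if L.head? = some (x + 1) then [x + 1] else []) ++ upsList L := by
  cases L with
  | nil => rfl
  | cons y T =>
    simp only [upsList, List.tail, List.zip_cons_cons, List.filter_cons, beq_iff_eq,
      List.head?_cons, Option.some.injEq]
    split_ifs with h <;> simp [h]

def descent (b : ℕ) : ℕ → List ℕ
  | 0 => [b]
  | k + 1 => (b + k + 1) :: descent b k

lemma head?_descent_append (b k : ℕ) (M : List ℕ) :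
    (descent b k ++ M).head? = some (b + k) := by
  cases k <;> rfl

lemma getLast?_descent (b k : ℕ) : (descent b k).getLast? = some b := by
  induction k with
  | zero => rfl
  | succ k ih =>
    rw [descent, List.getLast?_cons, ih]
    rfl

lemma isChain_descent (b k : ℕ) :
    (descent b k).IsChain (fun x y => y = x + 1 ∨ x = y + 1) := by
  induction k with
  | zero => exact List.isChain_singleton _
  | succ k ih =>
    rw [descent, List.isChain_cons]
    refine ⟨fun y hy => ?_, ih⟩
    rw [← List.append_nil (descent b k), head?_descent_append, Option.mem_def,
      Option.some.injEq] at hy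
    omega

lemma upsList_descent_append (b k : ℕ) (M : List ℕ) :
    upsList (descent b k ++ M) = upsList (b :: M) := by
  induction k with
  | zero => rfl
  | succ k ih =>
    rw [descent, List.cons_append, upsList_cons, head?_descent_append,
      if_neg (by rw [Option.some_inj]; omega), List.nil_append, ih]

lemma upsList_descent_append_of_head? {b : ℕ} (k : ℕ) {M : List ℕ}
    (hM : M.head? = some (b + 1)) :
    upsList (descent b k ++ M) = (b + 1) :: upsList M := by
  rw [upsList_descent_append, upsList_cons, if_pos hM, List.singleton_append]

lemma IsTraj.head? {Y X : ℕ} {L : List ℕ} (h : IsTraj Y X L) : L.head? = some Y := h.1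

lemma isTraj_singleton {Y X : ℕ} : IsTraj Y X [Y] ↔ Y = X := by
  simp [IsTraj, List.Chain']

lemma isTraj_cons_cons {Y X y : ℕ} {T : List ℕ} :
    IsTraj Y X (Y :: y :: T) ↔ (y = Y + 1 ∨ Y = y + 1) ∧ IsTraj y X (y :: T) := by
  simp only [IsTraj, List.head?_cons, List.getLast?_cons_cons, List.Chain',
    List.isChain_cons_cons, true_and]
  tauto

lemma isTraj_descent_append {b k X : ℕ} {M : List ℕ} (hM : IsTraj (b + 1) X M) :
    IsTraj (b + k) X (descent b k ++ M) := by
  obtain ⟨hhead, hlast, hchain⟩ := hM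
  refine ⟨head?_descent_append b k M, ?_, ?_⟩
  · rw [List.getLast?_append, hlast]
    rfl
  · rw [List.Chain', List.isChain_append]
    refine ⟨isChain_descent b k, hchain, fun x hx y hy => ?_⟩
    rw [getLast?_descent, Option.mem_def, Option.some.injEq] at hx
    rw [hhead, Option.mem_def, Option.some.injEq] at hy
    omega

lemma eq_descent_of_upsList_eq_nil {Y X : ℕ} {L : List ℕ} (h : IsTraj Y X L)
    (hups : upsList L = []) : X ≤ Y ∧ L = descent X (Y - X) := by
  induction L generalizing Y with
  | nil => exact absurd h.head? (by simp)
  | cons x T ih =>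
    obtain rfl : x = Y := by simpa using h.head?
    cases T with
    | nil =>
      obtain rfl := isTraj_singleton.mp h
      simp [descent]
    | cons y T =>
      obtain ⟨hstep, hT⟩ := isTraj_cons_cons.mp h
      rcases hstep with rfl | hdown
      · simp [upsList_cons] at hups
      rw [upsList_cons, List.head?_cons, if_neg (by rw [Option.some_inj]; omega),
        List.nil_append] at hups
      obtain ⟨hXy, hdesc⟩ := ih hT hups
      refine ⟨by omega, ?_⟩
      rw [show x - X = y - X + 1 by omega, descent, hdesc]
      congr 1
      omega

lemma exists_eq_descent_append {Y X : ℕ} {L : List ℕ} (h : IsTraj Y X L)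
    (hups : upsList L ≠ []) :
    ∃ b ≤ Y, ∃ M, IsTraj (b + 1) X M ∧ L = descent b (Y - b) ++ M := by
  induction L generalizing Y with
  | nil => exact absurd h.head? (by simp)
  | cons x T ih =>
    obtain rfl : x = Y := by simpa using h.head?
    cases T with
    | nil => simp [upsList] at hups
    | cons y T =>
      obtain ⟨hstep, hT⟩ := isTraj_cons_cons.mp h
      rcases hstep with rfl | hdown
      · exact ⟨x, le_rfl, _, hT, by simp [descent]⟩
      · rw [upsList_cons, List.head?_cons, if_neg (by rw [Option.some_inj]; omega),
          List.nil_append] at hups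
        obtain ⟨b, hb, M, hM, hdesc⟩ := ih hT hups
        refine ⟨b, by omega, M, hM, ?_⟩
        rw [hdesc, show x - b = y - b + 1 by omega, descent, List.cons_append]
        congr 1
        omega

lemma omega_succ_eq (X Y S : ℕ) :
    Omega X Y (S + 1) =
      ⋃ b ∈ (Finset.range (Y + 1) : Set ℕ),
        (descent b (Y - b) ++ ·) '' Omega X (b + 1) S := by
  ext L
  simp only [Set.mem_iUnion, Finset.coe_range, Set.mem_Iio, Set.mem_image, exists_prop]
  constructor
  · rintro ⟨hL, hlen⟩
    obtain ⟨b, hb, M, hM, rfl⟩ :=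
      exists_eq_descent_append hL (List.ne_nil_of_length_pos (by omega))
    rw [upsList_descent_append_of_head? _ hM.head?, List.length_cons] at hlen
    exact ⟨b, by omega, M, ⟨hM, by omega⟩, rfl⟩
  · rintro ⟨b, hb, M, ⟨hM, hlen⟩, rfl⟩
    refine ⟨?_, by rw [upsList_descent_append_of_head? _ hM.head?, List.length_cons, hlen]⟩
    simpa [show b + (Y - b) = Y by omega] using isTraj_descent_append (k := Y - b) hM

lemma omega_finite (X Y S : ℕ) : (Omega X Y S).Finite := by
  induction S generalizing Y with
  | zero =>
    refine (Set.finite_singleton (descent X (Y - X))).subset fun L ⟨hL, hlen⟩ => ?_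
    exact (eq_descent_of_upsList_eq_nil hL (List.length_eq_zero_iff.mp hlen)).2
  | succ S ih =>
    rw [omega_succ_eq]
    exact (Finset.finite_toSet _).biUnion fun b _ => (ih (b + 1)).image _

lemma XiZ_succ (X Y S : ℕ) :
    XiZ X Y (S + 1) = ∑ b ∈ Finset.range (Y + 1), ((b + 1 : ℕ) : ℤ) * XiZ X (b + 1) S := by
  have hfirst : ∀ b, ∀ L ∈ (descent b (Y - b) ++ ·) '' Omega X (b + 1) S,
      (upsList L).head? = some (b + 1) := by
    rintro b _ ⟨M, hM, rfl⟩
    rw [upsList_descent_append_of_head? _ hM.1.head?, List.head?_cons]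
  have hdisj : (Finset.range (Y + 1) : Set ℕ).PairwiseDisjoint
      fun b => (descent b (Y - b) ++ ·) '' Omega X (b + 1) S := by
    refine fun b _ b' _ hne => Set.disjoint_left.mpr fun L hL hL' => hne ?_
    simpa using (hfirst b L hL).symm.trans (hfirst b' L hL')
  rw [XiZ, omega_succ_eq, finsum_mem_biUnion hdisj (Finset.finite_toSet _)
    (fun b _ => (omega_finite X (b + 1) S).image _), finsum_mem_coe_finset]
  refine Finset.sum_congr rfl fun b _ => ?_
  rw [finsum_mem_image fun _ _ _ _ h => List.append_cancel_left h, XiZ, mul_finsum_mem]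
  refine finsum_mem_congr rfl fun M hM => ?_
  rw [upsList_descent_append_of_head? _ hM.1.head?, List.prod_cons, Nat.cast_mul]

theorem stmt12_general (Y S : ℕ) (hS : 1 ≤ S) :
    XiZ 0 Y S = ∑ e ∈ Finset.Icc 1 (Y + 1), (e : ℤ) * XiZ 0 e (S - 1) := by
  obtain ⟨S, rfl⟩ : ∃ S', S = S' + 1 := ⟨S - 1, by omega⟩
  rw [XiZ_succ, Nat.add_sub_cancel, Finset.range_eq_Ico,
    Finset.sum_Ico_add' (fun e : ℕ => (e : ℤ) * XiZ 0 e S), Finset.Ico_add_one_right_eq_Icc]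

theorem stmt12 (Y S : ℕ) (hY : 1 ≤ Y) (hS : 1 ≤ S) :
    XiZ 0 Y S = ∑ e ∈ Finset.Icc 1 (Y + 1), (e : ℤ) * XiZ 0 e (S - 1) :=
  stmt12_general Y S hS
end

section
/- For natural numbers Y and S, Ξ(0,Y,S) = C(Y+2S, Y) · (2S−1)!!, where Ξ(0,Y,S) = Σ_{Δ ∈ Ω(0,Y,S)} ∏_{j=1}^{S} e(Δ,j), C denotes the binomial coefficient, and (2S−1)!! = 1·3·5···(2S−1) with the convention (−1)!! = 1. -/
open scoped Nat

/-!
Classify a path by its first step. A path of `Ω(0, Y+1, S+1)` starts with an up-step, contributing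
the factor `Y + 2` to the product, or with a down-step, contributing nothing; paths starting at `0`
must go up. Hence `Ξ(Y+1, S+1) = (Y+2) Ξ(Y+2, S) + Ξ(Y, S+1)`, `Ξ(0, S+1) = Ξ(1, S)` and
`Ξ(Y+1, 0) = Ξ(Y, 0) = 1`, and `C(Y+2S, Y) (2S-1)!!` satisfies the same recursion by Pascal's rule
together with `(Y+2) C(n, Y+2) = (n-Y-1) C(n, Y+1)`.
-/

lemma upsList_cons_cons (a b : ℕ) (t : List ℕ) :
    upsList (a :: b :: t) = if b = a + 1 then b :: upsList (b :: t) else upsList (b :: t) := by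
  simp only [upsList, List.tail_cons, List.zip_cons_cons, List.filter_cons, beq_iff_eq]
  split <;> simp_all

section FirstStep

variable {X Y S : ℕ} {L : List ℕ}

lemma exists_eq_cons_of_mem_omega (h : L ∈ Omega X Y S) : ∃ t, L = Y :: t := by
  obtain ⟨⟨hhead, -, -⟩, -⟩ := h
  match L, hhead with
  | b :: t, hhead => exact ⟨t, by simpa using hhead⟩

lemma cons_mem_omega_of_mem_omega_succ (h : L ∈ Omega X (Y + 1) S) :
    Y :: L ∈ Omega X Y (S + 1) := by
  obtain ⟨t, rfl⟩ := exists_eq_cons_of_mem_omega h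
  obtain ⟨⟨-, hlast, hchain⟩, hups⟩ := h
  refine ⟨⟨rfl, by rwa [List.getLast?_cons_cons], List.isChain_cons_cons.2 ⟨Or.inl rfl, hchain⟩⟩, ?_⟩
  rw [upsList_cons_cons, if_pos rfl, List.length_cons, hups]

lemma succ_cons_mem_omega (h : L ∈ Omega X Y S) : (Y + 1) :: L ∈ Omega X (Y + 1) S := by
  obtain ⟨t, rfl⟩ := exists_eq_cons_of_mem_omega h
  obtain ⟨⟨-, hlast, hchain⟩, hups⟩ := h
  refine ⟨⟨rfl, by rwa [List.getLast?_cons_cons], List.isChain_cons_cons.2 ⟨Or.inr rfl, hchain⟩⟩, ?_⟩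
  rwa [upsList_cons_cons, if_neg (by omega)]

lemma mem_omega_cases (h : L ∈ Omega X Y S) :
    (L = [Y] ∧ Y = X ∧ S = 0) ∨
    (∃ t S', L = Y :: t ∧ S = S' + 1 ∧ t ∈ Omega X (Y + 1) S') ∨
    (∃ t Y', L = Y :: t ∧ Y = Y' + 1 ∧ t ∈ Omega X Y' S) := by
  obtain ⟨t, rfl⟩ := exists_eq_cons_of_mem_omega h
  obtain ⟨⟨-, hlast, hchain⟩, hups⟩ := h
  rcases t with _ | ⟨b, t⟩
  · exact Or.inl ⟨rfl, by simpa using hlast, by simpa [upsList] using hups.symm⟩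
  · rw [List.getLast?_cons_cons] at hlast
    obtain ⟨hstep, htail⟩ := List.isChain_cons_cons.1 hchain
    rcases hstep with rfl | rfl
    · rw [upsList_cons_cons, if_pos rfl, List.length_cons] at hups
      exact Or.inr (Or.inl ⟨_, _, rfl, hups.symm, ⟨rfl, hlast, htail⟩, rfl⟩)
    · rw [upsList_cons_cons, if_neg (by omega)] at hups
      exact Or.inr (Or.inr ⟨_, _, rfl, rfl, ⟨rfl, hlast, htail⟩, hups⟩)

lemma prod_upsList_cons_of_mem_omega_succ (h : L ∈ Omega X (Y + 1) S) :
    (upsList (Y :: L)).prod = (Y + 1) * (upsList L).prod := by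
  obtain ⟨t, rfl⟩ := exists_eq_cons_of_mem_omega h
  rw [upsList_cons_cons, if_pos rfl, List.prod_cons]

lemma upsList_succ_cons_of_mem_omega (h : L ∈ Omega X Y S) :
    upsList ((Y + 1) :: L) = upsList L := by
  obtain ⟨t, rfl⟩ := exists_eq_cons_of_mem_omega h
  rw [upsList_cons_cons, if_neg (by omega)]

lemma omega_disjoint_of_ne {Y' S' : ℕ} (hY : Y ≠ Y') : Disjoint (Omega X Y S) (Omega X Y' S') :=
  Set.disjoint_left.2 fun _ h h' => by
    obtain ⟨t, rfl⟩ := exists_eq_cons_of_mem_omega h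
    obtain ⟨t', ht'⟩ := exists_eq_cons_of_mem_omega h'
    exact hY (List.cons_eq_cons.1 ht').1

end FirstStep

section Decomposition

variable {X : ℕ}

lemma omega_zero_zero_zero : Omega 0 0 0 = {[0]} := by
  ext L
  refine ⟨fun h => ?_, ?_⟩
  · rcases mem_omega_cases h with ⟨rfl, -⟩ | ⟨_, _, _, h0, _⟩ | ⟨_, _, _, h0, _⟩ <;> simp_all
  · rintro rfl
    exact ⟨⟨rfl, rfl, List.isChain_singleton _⟩, rfl⟩

lemma omega_zero_succ_zero (Y : ℕ) : Omega 0 (Y + 1) 0 = List.cons (Y + 1) '' Omega 0 Y 0 := by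
  ext L
  refine ⟨fun h => ?_, ?_⟩
  · rcases mem_omega_cases h with ⟨-, h0, -⟩ | ⟨_, _, _, h0, _⟩ | ⟨t, _, rfl, hY, ht⟩
    · omega
    · omega
    · exact ⟨t, Nat.succ_injective hY ▸ ht, rfl⟩
  · rintro ⟨t, ht, rfl⟩
    exact succ_cons_mem_omega ht

lemma omega_zero_succ (S : ℕ) : Omega X 0 (S + 1) = List.cons 0 '' Omega X 1 S := by
  ext L
  refine ⟨fun h => ?_, ?_⟩
  · rcases mem_omega_cases h with ⟨-, -, h0⟩ | ⟨t, _, rfl, hS, ht⟩ | ⟨_, _, _, h0, _⟩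
    · omega
    · exact ⟨t, Nat.succ_injective hS ▸ ht, rfl⟩
    · omega
  · rintro ⟨t, ht, rfl⟩
    exact cons_mem_omega_of_mem_omega_succ ht

lemma omega_succ_succ (Y S : ℕ) :
    Omega X (Y + 1) (S + 1) =
      List.cons (Y + 1) '' Omega X (Y + 2) S ∪ List.cons (Y + 1) '' Omega X Y (S + 1) := by
  ext L
  refine ⟨fun h => ?_, ?_⟩
  · rcases mem_omega_cases h with ⟨-, -, h0⟩ | ⟨t, _, rfl, hS, ht⟩ | ⟨t, _, rfl, hY, ht⟩
    · omega
    · exact Or.inl ⟨t, Nat.succ_injective hS ▸ ht, rfl⟩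
    · exact Or.inr ⟨t, Nat.succ_injective hY ▸ ht, rfl⟩
  · rintro (⟨t, ht, rfl⟩ | ⟨t, ht, rfl⟩)
    · exact cons_mem_omega_of_mem_omega_succ ht
    · exact succ_cons_mem_omega ht

end Decomposition

/-- Induction along the recursion `Ξ(Y+1, S+1) ← Ξ(Y+2, S), Ξ(Y, S+1)`, which decreases `Y + 2S`. -/
theorem firstStep_induction {P : ℕ → ℕ → Prop} (zero_zero : P 0 0)
    (succ_zero : ∀ Y, P Y 0 → P (Y + 1) 0) (zero_succ : ∀ S, P 1 S → P 0 (S + 1))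
    (succ_succ : ∀ Y S, P (Y + 2) S → P Y (S + 1) → P (Y + 1) (S + 1)) (Y S : ℕ) : P Y S := by
  induction S generalizing Y with
  | zero =>
    induction Y with
    | zero => exact zero_zero
    | succ Y ih => exact succ_zero Y ih
  | succ S ihS =>
    induction Y with
    | zero => exact zero_succ S (ihS 1)
    | succ Y ihY => exact succ_succ Y S (ihS _) ihY

lemma omega_zero_finite (Y S : ℕ) : (Omega 0 Y S).Finite := by
  induction Y, S using firstStep_induction with
  | zero_zero => simp [omega_zero_zero_zero]
  | succ_zero Y ih => exact omega_zero_succ_zero Y ▸ ih.image _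
  | zero_succ S ih => exact omega_zero_succ S ▸ ih.image _
  | succ_succ Y S ih₂ ih₀ => exact omega_succ_succ Y S ▸ (ih₂.image _).union (ih₀.image _)

lemma xiZ_zero_zero_zero : XiZ 0 0 0 = 1 := by
  simp [XiZ, omega_zero_zero_zero, upsList]

lemma xiZ_zero_succ_zero (Y : ℕ) : XiZ 0 (Y + 1) 0 = XiZ 0 Y 0 := by
  rw [XiZ, XiZ, omega_zero_succ_zero, finsum_mem_image List.cons_injective.injOn]
  exact finsum_mem_congr rfl fun L hL => by rw [upsList_succ_cons_of_mem_omega hL]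

lemma xiZ_zero_succ (X S : ℕ) : XiZ X 0 (S + 1) = XiZ X 1 S := by
  rw [XiZ, XiZ, omega_zero_succ, finsum_mem_image List.cons_injective.injOn]
  exact finsum_mem_congr rfl fun L hL => by
    rw [prod_upsList_cons_of_mem_omega_succ hL, zero_add, one_mul]

lemma xiZ_zero_succ_succ (Y S : ℕ) :
    XiZ 0 (Y + 1) (S + 1) = (Y + 2) * XiZ 0 (Y + 2) S + XiZ 0 Y (S + 1) := by
  have hdisj : Disjoint (List.cons (Y + 1) '' Omega 0 (Y + 2) S)
      (List.cons (Y + 1) '' Omega 0 Y (S + 1)) := by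
    rw [Set.disjoint_image_iff List.cons_injective]
    exact omega_disjoint_of_ne (by omega)
  rw [XiZ, XiZ, XiZ, omega_succ_succ, finsum_mem_union hdisj ((omega_zero_finite _ _).image _)
    ((omega_zero_finite _ _).image _), finsum_mem_image List.cons_injective.injOn,
    finsum_mem_image List.cons_injective.injOn, mul_finsum_mem]
  congr 1
  · refine finsum_mem_congr rfl fun L hL => ?_
    rw [prod_upsList_cons_of_mem_omega_succ hL]
    push_cast
    ring
  · exact finsum_mem_congr rfl fun L hL => by rw [upsList_succ_cons_of_mem_omega hL]

lemma choose_mul_doubleFactorial_succ_succ (Y S : ℕ) :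
    (Y + 1 + 2 * (S + 1)).choose (Y + 1) * (2 * (S + 1) - 1)‼ =
      (Y + 2) * ((Y + 2 + 2 * S).choose (Y + 2) * (2 * S - 1)‼) +
        (Y + 2 * (S + 1)).choose Y * (2 * (S + 1) - 1)‼ := by
  have hpascal : (Y + 2 * S + 3).choose (Y + 1) =
      (Y + 2 * S + 2).choose Y + (Y + 2 * S + 2).choose (Y + 1) :=
    Nat.choose_succ_succ' _ _
  have hshift : (Y + 2 * S + 2).choose (Y + 2) * (Y + 2) =
      (Y + 2 * S + 2).choose (Y + 1) * (2 * S + 1) := by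
    simpa [show Y + 2 * S + 2 - (Y + 1) = 2 * S + 1 by omega] using
      Nat.choose_succ_right_eq (Y + 2 * S + 2) (Y + 1)
  rw [show 2 * (S + 1) - 1 = 2 * S + 1 by omega, Nat.doubleFactorial_add_one,
    show Y + 1 + 2 * (S + 1) = Y + 2 * S + 3 by ring, show Y + 2 + 2 * S = Y + 2 * S + 2 by ring,
    show Y + 2 * (S + 1) = Y + 2 * S + 2 by ring, hpascal]
  linear_combination (2 * S - 1)‼ * hshift.symm

theorem stmt14 (Y S : ℕ) :
    XiZ 0 Y S = (Nat.choose (Y + 2 * S) Y : ℤ) * (Nat.doubleFactorial (2 * S - 1) : ℤ) := by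
  induction Y, S using firstStep_induction with
  | zero_zero => simp [xiZ_zero_zero_zero]
  | succ_zero Y ih => simp [xiZ_zero_succ_zero, ih]
  | zero_succ S ih =>
    rw [xiZ_zero_succ, ih, show 2 * (S + 1) - 1 = 2 * S + 1 by omega, Nat.doubleFactorial_add_one,
      Nat.choose_one_right, Nat.choose_zero_right]
    push_cast
    ring
  | succ_succ Y S ih₂ ih₀ =>
    rw [xiZ_zero_succ_succ, ih₂, ih₀]
    exact_mod_cast (choose_mul_doubleFactorial_succ_succ Y S).symm
end

section
/- In the Young–Fibonacci graph, the number of saturated downward paths from a word x (over alphabet {1,2}) to the empty word ε equals ∏_{j=1}^{d(x)} g(x,j), where d(x) is the number of 2s in x and, writing x = 1^{β_{d(x)}} 2 1^{β_{d(x)−1}} 2 ⋯ 2 1^{β_0}, we set g(x,j) = β_0 + β_1 + ⋯ + β_{j−1} + 2j − 1. -/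
/-- Index of the leftmost `1` in a word (equals the length if there is no `1`). -/
def firstOnePos (w : List ℕ) : ℕ := w.findIdx (fun d => d == 1)

/-- The vertices covering `y` in the Young–Fibonacci graph: insert a `1` anywhere to the
left of the leftmost `1`, or replace the leftmost `1` by a `2`. -/
def children (y : List ℕ) : Set (List ℕ) :=
  {u | (∃ j, j ≤ firstOnePos y ∧ j ≤ y.length ∧ u = y.take j ++ 1 :: y.drop j) ∨
       (firstOnePos y < y.length ∧ u = y.set (firstOnePos y) 2)}

/-- The vertices covered by `w` in the Young–Fibonacci graph: replace one of the `2`s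
preceding the first `1` by a `1`, or delete the first `1`. -/
def parents (w : List ℕ) : Set (List ℕ) :=
  {u | (∃ j, j < firstOnePos w ∧ u = w.set j 1) ∨
       (firstOnePos w < w.length ∧
         u = w.take (firstOnePos w) ++ w.drop (firstOnePos w + 1))}

theorem firstOnePos_one_cons (s : List ℕ) : firstOnePos (1 :: s) = 0 := by
  simp [firstOnePos, List.findIdx_cons]

theorem firstOnePos_cons_of_ne_one {d : ℕ} (hd : d ≠ 1) (s : List ℕ) :
    firstOnePos (d :: s) = firstOnePos s + 1 := by
  simp [firstOnePos, List.findIdx_cons, beq_false_of_ne hd]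

theorem mem_children_nil {x : List ℕ} : x ∈ children [] ↔ x = [1] := by
  simp [children, firstOnePos]

theorem mem_children_one_cons {x s : List ℕ} :
    x ∈ children (1 :: s) ↔ x = 1 :: 1 :: s ∨ x = 2 :: s := by
  simp [children, firstOnePos_one_cons]

theorem mem_children_cons_of_ne_one {d : ℕ} (hd : d ≠ 1) {x s : List ℕ} :
    x ∈ children (d :: s) ↔ x = 1 :: d :: s ∨ ∃ u ∈ children s, x = d :: u := by
  simp only [children, Set.mem_ofPred_eq, firstOnePos_cons_of_ne_one hd]
  constructor
  · rintro (⟨_ | j, hj, hjl, rfl⟩ | ⟨hlt, rfl⟩)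
    · simp
    · exact Or.inr ⟨_, Or.inl ⟨j, by omega, by simpa using hjl, rfl⟩, by simp⟩
    · exact Or.inr ⟨_, Or.inr ⟨by simpa using hlt, rfl⟩, by simp⟩
  · rintro (rfl | ⟨u, ⟨j, hj, hjl, rfl⟩ | ⟨hlt, rfl⟩, rfl⟩)
    · exact Or.inl ⟨0, by omega, by simp, by simp⟩
    · exact Or.inl ⟨j + 1, by omega, by simpa using hjl, by simp⟩
    · exact Or.inr ⟨by simpa using hlt, by simp⟩

def parentsList : List ℕ → List (List ℕ)
  | [] => []
  | d :: t =>
      if d = 1 then [t]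
      else (if d = 2 then [1 :: t] else []) ++ (parentsList t).map (d :: ·)

theorem parentsList_one_cons (t : List ℕ) : parentsList (1 :: t) = [t] := by
  simp [parentsList]

theorem parentsList_two_cons (t : List ℕ) :
    parentsList (2 :: t) = (1 :: t) :: (parentsList t).map (2 :: ·) := by
  simp [parentsList]

theorem mem_parentsList_cons_of_ne_one {a : ℕ} (ha : a ≠ 1) {t y : List ℕ} :
    y ∈ parentsList (a :: t) ↔ (a = 2 ∧ y = 1 :: t) ∨ ∃ u ∈ parentsList t, y = a :: u := by
  by_cases h2 : a = 2 <;> simp [parentsList, ha, h2, eq_comm]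

theorem mem_children_iff_mem_parentsList {x y : List ℕ} :
    x ∈ children y ↔ y ∈ parentsList x := by
  induction x generalizing y with
  | nil =>
    rcases y with _ | ⟨b, s⟩
    · simp [mem_children_nil, parentsList]
    · by_cases hb : b = 1
      · simp [hb, mem_children_one_cons, parentsList]
      · simp [mem_children_cons_of_ne_one hb, parentsList]
  | cons a t ih =>
    rcases y with _ | ⟨b, s⟩
    · by_cases ha : a = 1 <;> simp [mem_children_nil, parentsList, ha]
    · by_cases hb : b = 1 <;> by_cases ha : a = 1 <;>
        simp [hb, ha, mem_children_one_cons, mem_children_cons_of_ne_one, parentsList_one_cons,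
          mem_parentsList_cons_of_ne_one, ih, eq_comm]

theorem nodup_parentsList (x : List ℕ) : (parentsList x).Nodup := by
  induction x with
  | nil => simp [parentsList]
  | cons d t ih =>
    have hmap : ((parentsList t).map (d :: ·)).Nodup := ih.map List.cons_injective
    by_cases h1 : d = 1
    · simp [parentsList, h1]
    by_cases h2 : d = 2
    · subst h2
      simpa [parentsList] using hmap
    · simpa [parentsList, h1, h2] using hmap

theorem sum_add_one_of_mem_parentsList {x y : List ℕ} (h : y ∈ parentsList x) :
    y.sum + 1 = x.sum := by
  induction x generalizing y with
  | nil => simp [parentsList] at h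
  | cons a t ih =>
    by_cases ha : a = 1
    · rw [ha, parentsList_one_cons, List.mem_singleton] at h
      rw [h, List.sum_cons, ha, add_comm]
    rcases (mem_parentsList_cons_of_ne_one ha).1 h with ⟨rfl, rfl⟩ | ⟨u, hu, rfl⟩
    · simp only [List.sum_cons]
      omega
    · simp only [List.sum_cons, ← ih hu]
      omega

theorem mem_or_eq_one_of_mem_parentsList {x y : List ℕ} (h : y ∈ parentsList x) {d : ℕ}
    (hd : d ∈ y) : d ∈ x ∨ d = 1 := by
  induction x generalizing y with
  | nil => simp [parentsList] at h
  | cons a t ih =>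
    by_cases ha : a = 1
    · rw [ha, parentsList_one_cons, List.mem_singleton] at h
      exact Or.inl (List.mem_cons_of_mem _ (h ▸ hd))
    rcases (mem_parentsList_cons_of_ne_one ha).1 h with ⟨rfl, rfl⟩ | ⟨u, hu, rfl⟩
    · rcases List.mem_cons.1 hd with rfl | hd
      · exact Or.inr rfl
      · exact Or.inl (List.mem_cons_of_mem _ hd)
    · rcases List.mem_cons.1 hd with rfl | hd
      · exact Or.inl List.mem_cons_self
      · exact (ih hu hd).imp_left (List.mem_cons_of_mem _)

def IsDownPath (n : ℕ) (x : List ℕ) (P : List (List ℕ)) : Prop :=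
  P.head? = some x ∧ P.getLast? = some ([] : List ℕ) ∧ P.length = n + 1 ∧
    P.IsChain (fun a b => a ∈ children b)

theorem isDownPath_zero_iff {x : List ℕ} {P : List (List ℕ)} :
    IsDownPath 0 x P ↔ x = [] ∧ P = [[]] := by
  constructor
  · rintro ⟨hh, hl, hlen, -⟩
    obtain ⟨a, rfl⟩ := List.length_eq_one_iff.1 hlen
    simp_all
  · rintro ⟨rfl, rfl⟩
    exact ⟨rfl, rfl, rfl, List.isChain_singleton _⟩

theorem isDownPath_succ_iff {n : ℕ} {x : List ℕ} {P : List (List ℕ)} :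
    IsDownPath (n + 1) x P ↔ ∃ y ∈ parentsList x, ∃ Q, IsDownPath n y Q ∧ x :: Q = P := by
  simp only [IsDownPath, ← mem_children_iff_mem_parentsList]
  constructor
  · rintro ⟨hh, hl, hlen, hc⟩
    match P, hlen with
    | a :: b :: R, _ =>
      simp_all [List.isChain_cons_cons]
  · rintro ⟨y, hy, Q, ⟨hh, hl, hlen, hc⟩, rfl⟩
    match Q, hlen with
    | b :: R, _ =>
      simp_all [List.isChain_cons_cons]

def downPaths : ℕ → List ℕ → List (List (List ℕ))
  | 0, x => if x = [] then [[[]]] else []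
  | n + 1, x => (parentsList x).flatMap fun y => (downPaths n y).map (x :: ·)

theorem mem_downPaths_iff {n : ℕ} {x : List ℕ} {P : List (List ℕ)} :
    P ∈ downPaths n x ↔ IsDownPath n x P := by
  induction n generalizing x P with
  | zero => by_cases hx : x = [] <;> simp [downPaths, isDownPath_zero_iff, hx]
  | succ n ih => simp [downPaths, isDownPath_succ_iff, ih]

theorem nodup_downPaths (n : ℕ) (x : List ℕ) : (downPaths n x).Nodup := by
  induction n generalizing x with
  | zero => by_cases hx : x = [] <;> simp [downPaths, hx]
  | succ n ih =>
    refine List.nodup_flatMap.2 ⟨fun y _ => (ih y).map List.cons_injective, ?_⟩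
    refine (nodup_parentsList x).imp fun {y y'} hne => ?_
    simp only [Function.onFun, List.disjoint_left, List.mem_map, mem_downPaths_iff]
    rintro _ ⟨Q, hQ, rfl⟩ ⟨Q', hQ', hQQ'⟩
    cases List.cons_injective hQQ'
    exact hne (Option.some_inj.1 (hQ.1.symm.trans hQ'.1))

theorem natCard_isDownPath (n : ℕ) (x : List ℕ) :
    Nat.card {P // IsDownPath n x P} = (downPaths n x).length := by
  rw [← List.toFinset_card_of_nodup (nodup_downPaths n x), ← Nat.card_eq_finsetCard]
  exact Nat.card_congr (Equiv.subtypeEquivRight fun P => by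
    rw [List.mem_toFinset, mem_downPaths_iff])

theorem length_downPaths_succ (n : ℕ) (x : List ℕ) :
    (downPaths (n + 1) x).length = ((parentsList x).map fun y => (downPaths n y).length).sum := by
  simp [downPaths, List.length_flatMap]

theorem takeBefore2_succ_append_of_lt_count {m : ℕ} {l : List ℕ} (r : List ℕ)
    (h : m < l.count 2) : takeBefore2 (m + 1) (l ++ r) = takeBefore2 (m + 1) l := by
  induction l generalizing m with
  | nil => simp at h
  | cons a t ih =>
    by_cases ha : a = 2
    · subst ha
      rcases m with _ | k
      · simp [takeBefore2]
      · simp only [List.count_cons_self] at h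
        simp [takeBefore2, ih (by omega : k < t.count 2)]
    · simp only [List.count_cons, beq_iff_eq, ha, if_false, Nat.add_zero] at h
      simp [takeBefore2, ha, ih h]

theorem takeBefore2_count_succ_append_two_cons (l r : List ℕ) :
    takeBefore2 (l.count 2 + 1) (l ++ 2 :: r) = l := by
  induction l with
  | nil => simp [takeBefore2]
  | cons a t ih =>
    by_cases ha : a = 2
    · subst ha
      simp [takeBefore2, ih]
    · simp [takeBefore2, ha, ih]

theorem gval_cons_of_le_count (d : ℕ) {t : List ℕ} {j : ℕ} (h1 : 1 ≤ j) (h2 : j ≤ t.count 2) :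
    gval (d :: t) j = gval t j := by
  obtain ⟨m, rfl⟩ := Nat.exists_eq_add_of_le' h1
  rw [gval, gval, List.reverse_cons,
    takeBefore2_succ_append_of_lt_count _ (by rw [List.count_reverse]; omega)]

def gvalProd (x : List ℕ) : ℕ := ∏ j ∈ Finset.Icc 1 (x.count 2), gval x j

theorem gvalProd_cons_of_ne_two {d : ℕ} (hd : d ≠ 2) (t : List ℕ) :
    gvalProd (d :: t) = gvalProd t := by
  rw [gvalProd, gvalProd, List.count_cons_of_ne hd]
  refine Finset.prod_congr rfl fun j hj => ?_
  rw [Finset.mem_Icc] at hj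
  exact gval_cons_of_le_count d hj.1 hj.2

theorem gvalProd_two_cons (t : List ℕ) : gvalProd (2 :: t) = (t.sum + 1) * gvalProd t := by
  have htop : gval (2 :: t) (t.count 2 + 1) = t.sum + 1 := by
    rw [gval, List.reverse_cons, ← List.count_reverse,
      takeBefore2_count_succ_append_two_cons, List.sum_reverse, add_comm]
  rw [gvalProd, gvalProd, List.count_cons_self, Finset.prod_Icc_succ_top (by omega), htop,
    mul_comm]
  congr 1
  refine Finset.prod_congr rfl fun j hj => ?_
  rw [Finset.mem_Icc] at hj
  exact gval_cons_of_le_count 2 hj.1 hj.2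

theorem sum_gvalProd_parentsList {x : List ℕ} (hx : ∀ d ∈ x, d = 1 ∨ d = 2) (hne : x ≠ []) :
    ((parentsList x).map gvalProd).sum = gvalProd x := by
  induction x with
  | nil => exact absurd rfl hne
  | cons a t ih =>
    rw [List.forall_mem_cons] at hx
    rcases hx.1 with rfl | rfl
    · simp [parentsList_one_cons, gvalProd_cons_of_ne_two]
    · have hparents : ∀ y ∈ parentsList t, gvalProd (2 :: y) = t.sum * gvalProd y := by
        intro y hy
        rw [gvalProd_two_cons, sum_add_one_of_mem_parentsList hy]
      have hsum : t.sum * ((parentsList t).map gvalProd).sum = t.sum * gvalProd t := by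
        rcases eq_or_ne t [] with rfl | ht
        · simp
        · rw [ih hx.2 ht]
      have hmap : ((parentsList t).map fun y => gvalProd (2 :: y)).sum = t.sum * gvalProd t := by
        rw [List.map_congr_left hparents, List.sum_map_mul_left, hsum]
      rw [parentsList_two_cons, List.map_cons, List.sum_cons, List.map_map, Function.comp_def,
        hmap, gvalProd_cons_of_ne_two (by norm_num), gvalProd_two_cons]
      ring

theorem length_downPaths {n : ℕ} {x : List ℕ} (hx : ∀ d ∈ x, d = 1 ∨ d = 2) (hn : x.sum = n) :
    (downPaths n x).length = gvalProd x := by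
  induction n generalizing x with
  | zero =>
    obtain rfl : x = [] := List.eq_nil_iff_forall_not_mem.2 fun d hd => by
      have := List.sum_eq_zero_iff.1 hn d hd
      rcases hx d hd with h | h <;> omega
    rfl
  | succ n ih =>
    have hne : x ≠ [] := by rintro rfl; simp at hn
    rw [length_downPaths_succ, ← sum_gvalProd_parentsList hx hne]
    congr 1
    refine List.map_congr_left fun y hy => ih ?_ ?_
    · intro d hd
      rcases mem_or_eq_one_of_mem_parentsList hy hd with h | h
      · exact hx d h
      · exact Or.inl h
    · have := sum_add_one_of_mem_parentsList hy
      omega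

theorem stmt18 (x : List ℕ) (hx : ∀ d ∈ x, d = 1 ∨ d = 2) :
    Nat.card {P : List (List ℕ) //
        P.head? = some x ∧ P.getLast? = some ([] : List ℕ) ∧
        P.length = x.sum + 1 ∧
        P.Chain' (fun a b => a ∈ children b)} =
      ∏ j ∈ Finset.Icc 1 (x.count 2), gval x j :=
  (natCard_isDownPath x.sum x).trans (length_downPaths hx rfl)
end
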